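/- arXiv:1612.03700 — 2 statements merged into one kernel-verified Lean document; each statement's English description precedes it below -/
import Mathlib

section
/- Define f(β) = Σ_{(x,y) ∈ ℕ² , gcd(x,y)=1} e^{−β(x+y)} for β > 0, the sum being over ordered pairs of coprime positive integers. For every complex number s with Re(s) > 2, the Mellin transform of f satisfies ∫₀^∞ f(β) β^{s−1} dβ = Γ(s) · (ζ(s−1) − ζ(s)) / ζ(s), where Γ is the Gamma function and ζ is the Riemann zeta function. -/
open Filter Real Complex MeasureTheory

/-- `f β = Σ_{(x,y) coprime positive integers} e^{-β(x+y)}`. -/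
noncomputable def coprimeExpSum (β : ℝ) : ℝ :=
  ∑' p : ℕ × ℕ,
    if 0 < p.1 ∧ 0 < p.2 ∧ Nat.Coprime p.1 p.2 then Real.exp (-β * ((p.1 : ℝ) + (p.2 : ℝ)))
    else 0

section aux

open scoped LSeries.notation

lemma summable_D {σ : ℝ} (hσ : 2 < σ) :
    Summable (fun p : ℕ × ℕ => ((p.1 : ℝ) ^ (σ/2))⁻¹ * ((p.2 : ℝ) ^ (σ/2))⁻¹) := by
  have h : Summable (fun n : ℕ => ((n : ℝ) ^ (σ/2))⁻¹) :=
    Real.summable_nat_rpow_inv.mpr (by linarith)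
  exact h.mul_of_nonneg h (fun n => by positivity) (fun n => by positivity)

lemma bound_D {σ : ℝ} (hσ : 2 < σ) {x y : ℕ} (hx : 0 < x) (hy : 0 < y) :
    ((x : ℝ) + y) ^ (-σ) ≤ ((x : ℝ) ^ (σ/2))⁻¹ * ((y : ℝ) ^ (σ/2))⁻¹ := by
  have hx' : (0:ℝ) < x := by exact_mod_cast hx
  have hy' : (0:ℝ) < y := by exact_mod_cast hy
  have hxy : (0:ℝ) < x + y := by linarith
  rw [Real.rpow_neg hxy.le, ← mul_inv]
  have hle : (x : ℝ) ^ (σ/2) * (y : ℝ) ^ (σ/2) ≤ ((x:ℝ)+y) ^ σ := by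
    calc (x : ℝ) ^ (σ/2) * (y : ℝ) ^ (σ/2)
        ≤ ((x:ℝ)+y) ^ (σ/2) * ((x:ℝ)+y) ^ (σ/2) := by
          gcongr <;> linarith
      _ = ((x:ℝ)+y) ^ σ := by rw [← Real.rpow_add hxy]; ring_nf
  exact inv_anti₀ (by positivity) hle

lemma bound_D' {σ : ℝ} (hσ : 2 < σ) {n x : ℕ} (hx : 0 < x) (hxn : x < n) :
    (n : ℝ) ^ (-σ) ≤ ((n : ℝ) ^ (σ/2))⁻¹ * ((x : ℝ) ^ (σ/2))⁻¹ := by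
  have hx' : (0:ℝ) < x := by exact_mod_cast hx
  have hxn' : (x:ℝ) ≤ n := by exact_mod_cast hxn.le
  have hn' : (0:ℝ) < n := lt_of_lt_of_le hx' hxn'
  rw [Real.rpow_neg hn'.le, ← mul_inv]
  have hle : (n : ℝ) ^ (σ/2) * (x : ℝ) ^ (σ/2) ≤ (n:ℝ) ^ σ := by
    calc (n : ℝ) ^ (σ/2) * (x : ℝ) ^ (σ/2)
        ≤ (n:ℝ) ^ (σ/2) * (n:ℝ) ^ (σ/2) := by
          have h2 : (0:ℝ) ≤ σ/2 := by linarith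
          exact mul_le_mul_of_nonneg_left (Real.rpow_le_rpow hx'.le hxn' h2) (by positivity)
      _ = (n:ℝ) ^ σ := by rw [← Real.rpow_add hn']; ring_nf
  exact inv_anti₀ (by positivity) hle

lemma totient_LSeries {s : ℂ} (hs : 2 < s.re) :
    LSeries (fun n => (Nat.totient n : ℂ)) s = riemannZeta (s - 1) / riemannZeta s := by
  have h1 : (1:ℝ) < s.re := by linarith
  have hφ : LSeriesSummable (fun n => (Nat.totient n : ℂ)) s := by
    apply LSeriesSummable_of_le_const_mul_rpow (x := 2) hs
    refine ⟨1, fun n hn => ?_⟩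
    rw [Complex.norm_natCast]
    calc (Nat.totient n : ℝ) ≤ (n : ℝ) := by exact_mod_cast Nat.totient_le n
      _ = 1 * (n:ℝ) ^ ((2:ℝ)-1) := by norm_num
  have hone : LSeriesSummable 1 s := LSeriesSummable_one_iff.mpr h1
  have hconv : (fun n => (Nat.totient n : ℂ)) ⍟ 1 = fun n : ℕ => (n : ℂ) := by
    funext n
    simp only [LSeries.convolution_def, Pi.one_apply, mul_one]
    rw [Nat.sum_divisorsAntidiagonal (fun x _ => (Nat.totient x : ℂ))]
    rw [← Nat.cast_sum]
    exact_mod_cast congrArg (Nat.cast (R := ℂ)) (Nat.sum_totient n)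
  have hs1 : s - 1 ≠ 0 := by
    intro h
    have : (s - 1).re = 0 := by rw [h]; simp
    simp only [Complex.sub_re, Complex.one_re] at this
    linarith
  have hid : LSeries (fun n : ℕ => (n : ℂ)) s = riemannZeta (s - 1) := by
    rw [show riemannZeta (s - 1) = ∑' n : ℕ, 1 / (n : ℂ) ^ (s - 1) from
      zeta_eq_tsum_one_div_nat_cpow (by simp only [Complex.sub_re, Complex.one_re]; linarith)]
    unfold LSeries
    congr 1; funext n
    rcases eq_or_ne n 0 with rfl | hn
    · rw [LSeries.term_zero, Nat.cast_zero, zero_cpow hs1, div_zero]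
    · rw [LSeries.term_of_ne_zero hn, Complex.cpow_sub _ _ (by exact_mod_cast hn : (n:ℂ) ≠ 0),
        Complex.cpow_one]
      rw [div_div_eq_mul_div, one_mul]
  have hmul := LSeries_convolution' hφ hone
  rw [hconv, hid, LSeries_one_eq_riemannZeta h1] at hmul
  rw [eq_div_iff (riemannZeta_ne_zero_of_one_lt_re h1)]
  exact hmul.symm

lemma totient_LSeriesSummable {s : ℂ} (hs : 2 < s.re) :
    LSeriesSummable (fun n => (Nat.totient n : ℂ)) s := by
  apply LSeriesSummable_of_le_const_mul_rpow (x := 2) hs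
  refine ⟨1, fun n hn => ?_⟩
  rw [Complex.norm_natCast]
  calc (Nat.totient n : ℝ) ≤ (n : ℝ) := by exact_mod_cast Nat.totient_le n
    _ = 1 * (n:ℝ) ^ ((2:ℝ)-1) := by norm_num

lemma coprime_pair_tsum {s : ℂ} (hs : 2 < s.re) :
    (∑' p : ℕ × ℕ, if 0 < p.1 ∧ 0 < p.2 ∧ Nat.Coprime p.1 p.2
        then 1 / ((p.1 + p.2 : ℕ) : ℂ) ^ s else 0)
      = riemannZeta (s - 1) / riemannZeta s - 1 := by
  have h1 : (1:ℝ) < s.re := by linarith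
  have hne : ∀ n : ℕ, 0 < n → (1 : ℂ) / ((n : ℕ) : ℂ) ^ s ≠ 0 := by
    intro n hn
    apply one_div_ne_zero
    rw [Ne, Complex.cpow_eq_zero_iff, not_and_or]
    exact Or.inl (Nat.cast_ne_zero.mpr hn.ne')
  have step1 : (∑' p : ℕ × ℕ, if 0 < p.1 ∧ 0 < p.2 ∧ Nat.Coprime p.1 p.2
        then 1 / ((p.1 + p.2 : ℕ) : ℂ) ^ s else 0)
      = ∑' q : ℕ × ℕ, (if 0 < q.2 ∧ q.2 < q.1 ∧ Nat.Coprime q.2 q.1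
          then 1 / ((q.1 : ℕ) : ℂ) ^ s else 0) := by
    apply tsum_eq_tsum_of_ne_zero_bij (fun q => (q.1.2, q.1.1 - q.1.2))
    · rintro ⟨q, hq⟩ ⟨q', hq'⟩ h
      have hc : 0 < q.2 ∧ q.2 < q.1 ∧ Nat.Coprime q.2 q.1 := by
        by_contra hC
        exact hq (by simp only [if_neg hC])
      have hc' : 0 < q'.2 ∧ q'.2 < q'.1 ∧ Nat.Coprime q'.2 q'.1 := by
        by_contra hC
        exact hq' (by simp only [if_neg hC])
      simp only [Prod.mk.injEq] at h
      apply Subtype.ext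
      have e1 : q.2 = q'.2 := h.1
      have e2 : q.1 - q.2 = q'.1 - q'.2 := h.2
      have : q.1 = q'.1 := by omega
      exact Prod.ext this e1
    · rintro p hp
      have hc : 0 < p.1 ∧ 0 < p.2 ∧ Nat.Coprime p.1 p.2 := by
        by_contra hC
        exact hp (by simp only [if_neg hC])
      have hmem : (if 0 < (p.1 + p.2, p.1).2 ∧ (p.1 + p.2, p.1).2 < (p.1 + p.2, p.1).1 ∧
          Nat.Coprime (p.1 + p.2, p.1).2 (p.1 + p.2, p.1).1
          then 1 / (((p.1 + p.2, p.1).1 : ℕ) : ℂ) ^ s else 0) ≠ 0 := by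
        have hcond : 0 < p.1 ∧ p.1 < p.1 + p.2 ∧ Nat.Coprime p.1 (p.1 + p.2) :=
          ⟨hc.1, by omega, (by rw [Nat.add_comm p.1 p.2]; exact Nat.coprime_add_self_right.mpr hc.2.2)⟩
        rw [if_pos hcond]
        exact hne _ (by omega)
      refine ⟨⟨(p.1 + p.2, p.1), hmem⟩, ?_⟩
      simp only
      rw [Nat.add_sub_cancel_left]
    · rintro ⟨q, hq⟩
      have hc : 0 < q.2 ∧ q.2 < q.1 ∧ Nat.Coprime q.2 q.1 := by
        by_contra hC
        exact hq (by simp only [if_neg hC])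
      obtain ⟨h2, h21, hcop⟩ := hc
      have hcond : 0 < q.2 ∧ 0 < q.1 - q.2 ∧ Nat.Coprime q.2 (q.1 - q.2) :=
        ⟨h2, by omega, (Nat.coprime_sub_self_right h21.le).mpr hcop⟩
      simp only
      rw [if_pos hcond, if_pos ⟨h2, h21, hcop⟩]
      have harg : q.2 + (q.1 - q.2) = q.1 := by omega
      rw [harg]
  have hGs : Summable (fun q : ℕ × ℕ => (if 0 < q.2 ∧ q.2 < q.1 ∧ Nat.Coprime q.2 q.1
          then 1 / ((q.1 : ℕ) : ℂ) ^ s else 0)) := by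
    apply Summable.of_norm
    apply Summable.of_nonneg_of_le (fun q => norm_nonneg _) _ (summable_D hs)
    intro q
    by_cases hcq : 0 < q.2 ∧ q.2 < q.1 ∧ Nat.Coprime q.2 q.1
    · rw [if_pos hcq, norm_div, norm_one,
        Complex.norm_natCast_cpow_of_pos (by omega : 0 < q.1)]
      rw [one_div, ← Real.rpow_neg (by positivity)]
      exact bound_D' hs hcq.1 hcq.2.1
    · rw [if_neg hcq, norm_zero]
      positivity
  have step2 : (∑' q : ℕ × ℕ, (if 0 < q.2 ∧ q.2 < q.1 ∧ Nat.Coprime q.2 q.1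
          then 1 / ((q.1 : ℕ) : ℂ) ^ s else 0))
      = ∑' n : ℕ, ∑' x : ℕ, (if 0 < x ∧ x < n ∧ Nat.Coprime x n
          then 1 / ((n : ℕ) : ℂ) ^ s else 0) := by
    refine Summable.tsum_prod' hGs fun n => ?_
    apply summable_of_ne_finset_zero (s := Finset.Ioo 0 n)
    intro x hx
    rw [Finset.mem_Ioo] at hx
    rw [if_neg (by tauto)]
  have inner : ∀ n : ℕ, (∑' x : ℕ, (if 0 < x ∧ x < n ∧ Nat.Coprime x n
          then 1 / ((n : ℕ) : ℂ) ^ s else 0))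
      = LSeries.term (fun m => (Nat.totient m : ℂ)) s n - (if n = 1 then 1 else 0) := by
    intro n
    have hfin : (∑' x : ℕ, (if 0 < x ∧ x < n ∧ Nat.Coprime x n
          then 1 / ((n : ℕ) : ℂ) ^ s else 0))
        = ∑ x ∈ Finset.Ioo 0 n, (if 0 < x ∧ x < n ∧ Nat.Coprime x n
          then 1 / ((n : ℕ) : ℂ) ^ s else 0) := by
      apply tsum_eq_sum
      intro x hx
      rw [Finset.mem_Ioo] at hx
      rw [if_neg (by tauto)]
    rcases eq_or_ne n 0 with rfl | hn0
    · rw [hfin]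
      simp [LSeries.term_zero]
    rcases eq_or_ne n 1 with rfl | hn1
    · rw [hfin, show Finset.Ioo 0 1 = ∅ by decide, Finset.sum_empty,
        LSeries.term_of_ne_zero one_ne_zero]
      simp [Nat.totient_one]
    have hn2 : 2 ≤ n := by omega
    rw [hfin]
    have hsum : (∑ x ∈ Finset.Ioo 0 n, (if 0 < x ∧ x < n ∧ Nat.Coprime x n
          then 1 / ((n : ℕ) : ℂ) ^ s else 0))
        = ∑ x ∈ (Finset.Ioo 0 n).filter (fun x => Nat.Coprime x n), (1 / ((n:ℕ):ℂ) ^ s) := by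
      rw [Finset.sum_filter]
      apply Finset.sum_congr rfl
      intro x hx
      rw [Finset.mem_Ioo] at hx
      by_cases hcx : Nat.Coprime x n
      · rw [if_pos ⟨hx.1, hx.2, hcx⟩, if_pos hcx]
      · rw [if_neg (by tauto), if_neg hcx]
    have hcard : (Finset.Ioo 0 n).filter (fun x => Nat.Coprime x n)
        = (Finset.range n).filter n.Coprime := by
      ext x
      simp only [Finset.mem_filter, Finset.mem_Ioo, Finset.mem_range]
      constructor
      · rintro ⟨⟨hx0, hxn⟩, hcx⟩
        exact ⟨hxn, Nat.coprime_comm.mp hcx⟩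
      · rintro ⟨hxn, hcx⟩
        have hx0 : 0 < x := by
          rcases Nat.eq_zero_or_pos x with rfl | h
          · rw [Nat.coprime_zero_right] at hcx; omega
          · exact h
        exact ⟨⟨hx0, hxn⟩, Nat.coprime_comm.mp hcx⟩
    rw [hsum, hcard, Finset.sum_const, ← Nat.totient_eq_card_coprime, nsmul_eq_mul,
      LSeries.term_of_ne_zero hn0, if_neg hn1, mul_one_div, sub_zero]
  have hind : Summable (fun n : ℕ => if n = 1 then (1:ℂ) else 0) := by
    apply summable_of_ne_finset_zero (s := ({1} : Finset ℕ))
    intro n hn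
    rw [if_neg (by simpa using hn)]
  calc (∑' p : ℕ × ℕ, if 0 < p.1 ∧ 0 < p.2 ∧ Nat.Coprime p.1 p.2
        then 1 / ((p.1 + p.2 : ℕ) : ℂ) ^ s else 0)
      = ∑' n : ℕ, ∑' x : ℕ, (if 0 < x ∧ x < n ∧ Nat.Coprime x n
          then 1 / ((n : ℕ) : ℂ) ^ s else 0) := by rw [step1, step2]
    _ = ∑' n : ℕ, (LSeries.term (fun m => (Nat.totient m : ℂ)) s n
          - (if n = 1 then 1 else 0)) := tsum_congr inner
    _ = (∑' n : ℕ, LSeries.term (fun m => (Nat.totient m : ℂ)) s n)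
          - ∑' n : ℕ, (if n = 1 then (1:ℂ) else 0) :=
        Summable.tsum_sub (totient_LSeriesSummable hs) hind
    _ = LSeries (fun m => (Nat.totient m : ℂ)) s - 1 := by
        rw [tsum_ite_eq]
        rfl
    _ = riemannZeta (s - 1) / riemannZeta s - 1 := by rw [totient_LSeries hs]

end aux

theorem stmt_3 (s : ℂ) (hs : 2 < s.re) :
    ∫ β in Set.Ioi (0 : ℝ), (coprimeExpSum β : ℂ) * (β : ℂ) ^ (s - 1) =
      Complex.Gamma s * (riemannZeta (s - 1) - riemannZeta s) / riemannZeta s := by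
  have h1 : (1:ℝ) < s.re := by linarith
  have hσ0 : 0 < s.re := by linarith
  have hp : ∀ p : ℕ × ℕ,
      (if 0 < p.1 ∧ 0 < p.2 ∧ Nat.Coprime p.1 p.2 then (1:ℂ) else 0) = 0
        ∨ 0 < ((p.1 : ℝ) + p.2) := by
    intro p
    by_cases h : 0 < p.1 ∧ 0 < p.2 ∧ Nat.Coprime p.1 p.2
    · right
      have hx : (0:ℝ) < p.1 := by exact_mod_cast h.1
      have hy : (0:ℝ) < p.2 := by exact_mod_cast h.2.1
      linarith
    · left
      rw [if_neg h]
  have hF : ∀ t ∈ Set.Ioi (0:ℝ), HasSum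
      (fun p : ℕ × ℕ => (if 0 < p.1 ∧ 0 < p.2 ∧ Nat.Coprime p.1 p.2 then (1:ℂ) else 0)
        * Real.exp (-((p.1:ℝ) + p.2) * t))
      ((coprimeExpSum t : ℝ) : ℂ) := by
    intro t ht
    rw [Set.mem_Ioi] at ht
    have hgeo : Summable (fun n : ℕ => Real.exp (-t) ^ n) :=
      summable_geometric_of_lt_one (Real.exp_nonneg _) (Real.exp_lt_one_iff.mpr (by linarith))
    have hgeo2 : Summable (fun p : ℕ × ℕ => Real.exp (-t) ^ p.1 * Real.exp (-t) ^ p.2) :=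
      hgeo.mul_of_nonneg hgeo (fun n => by positivity) (fun n => by positivity)
    have hsummable : Summable (fun p : ℕ × ℕ =>
        if 0 < p.1 ∧ 0 < p.2 ∧ Nat.Coprime p.1 p.2
          then Real.exp (-t * ((p.1 : ℝ) + (p.2 : ℝ))) else 0) := by
      apply Summable.of_nonneg_of_le (fun p => by positivity) _ hgeo2
      intro p
      by_cases h : 0 < p.1 ∧ 0 < p.2 ∧ Nat.Coprime p.1 p.2
      · rw [if_pos h]
        apply le_of_eq
        rw [← Real.exp_nat_mul, ← Real.exp_nat_mul, ← Real.exp_add]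
        congr 1
        ring
      · rw [if_neg h]
        positivity
    rw [coprimeExpSum]
    have h2 := (Complex.hasSum_ofReal (f := fun p : ℕ × ℕ =>
        if 0 < p.1 ∧ 0 < p.2 ∧ Nat.Coprime p.1 p.2
          then Real.exp (-t * ((p.1 : ℝ) + (p.2 : ℝ))) else 0)).mpr hsummable.hasSum
    apply h2.congr_fun
    intro p
    by_cases h : 0 < p.1 ∧ 0 < p.2 ∧ Nat.Coprime p.1 p.2
    · rw [if_pos h, if_pos h, one_mul]
      rw [show -((p.1:ℝ) + p.2) * t = -t * ((p.1:ℝ) + p.2) by ring]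
    · rw [if_neg h, if_neg h, zero_mul, Complex.ofReal_zero]
  have hnorm : Summable (fun p : ℕ × ℕ =>
      ‖(if 0 < p.1 ∧ 0 < p.2 ∧ Nat.Coprime p.1 p.2 then (1:ℂ) else 0)‖
        / ((p.1:ℝ) + p.2) ^ s.re) := by
    apply Summable.of_nonneg_of_le (fun p => by positivity) _ (summable_D hs)
    intro p
    by_cases h : 0 < p.1 ∧ 0 < p.2 ∧ Nat.Coprime p.1 p.2
    · rw [if_pos h, norm_one, one_div, ← Real.rpow_neg (by positivity)]
      exact bound_D hs h.1 h.2.1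
    · rw [if_neg h, norm_zero, zero_div]
      positivity
  have key := hasSum_mellin (F := fun t => ((coprimeExpSum t : ℝ) : ℂ)) hp hσ0 hF hnorm
  have hmel : (∫ β in Set.Ioi (0:ℝ), (coprimeExpSum β : ℂ) * (β:ℂ) ^ (s-1))
      = mellin (fun t => ((coprimeExpSum t : ℝ) : ℂ)) s := by
    rw [mellin]
    refine setIntegral_congr_fun measurableSet_Ioi fun t ht => ?_
    rw [smul_eq_mul, mul_comm]
  rw [hmel, ← key.tsum_eq]
  have hterm : ∀ p : ℕ × ℕ,
      Complex.Gamma s * (if 0 < p.1 ∧ 0 < p.2 ∧ Nat.Coprime p.1 p.2 then (1:ℂ) else 0)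
          / (((p.1:ℝ) + p.2 : ℝ) : ℂ) ^ s
      = Complex.Gamma s * (if 0 < p.1 ∧ 0 < p.2 ∧ Nat.Coprime p.1 p.2
          then 1 / ((p.1 + p.2 : ℕ) : ℂ) ^ s else 0) := by
    intro p
    by_cases h : 0 < p.1 ∧ 0 < p.2 ∧ Nat.Coprime p.1 p.2
    · rw [if_pos h, if_pos h, mul_one, mul_one_div]
      congr 2
      push_cast
      ring
    · rw [if_neg h, if_neg h]
      simp
  rw [tsum_congr hterm, tsum_mul_left, coprime_pair_tsum hs]
  have hz : riemannZeta s ≠ 0 := riemannZeta_ne_zero_of_one_lt_re h1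
  field_simp
end

section
/- If the function Δ(s) = Γ(s)(ζ(s−1) − ζ(s))/ζ(s) − (6/π²)/(s−2), initially defined for Re(s) > 2, admits a holomorphic continuation to the half-plane Re(s) > 1/2, then the Riemann zeta function has no zeros with real part strictly greater than 1/2, and hence (by the functional equation, which makes the zeros in the critical strip symmetric about the line Re(s) = 1/2) the Riemann Hypothesis holds. -/
open Real

noncomputable def Zfun : ℂ → ℂ := Function.update (fun s => (s - 1) * riemannZeta s) 1 1

lemma Zfun_eq {s : ℂ} (hs : s ≠ 1) : Zfun s = (s - 1) * riemannZeta s :=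
  Function.update_of_ne hs _ _

lemma Zfun_diff : Differentiable ℂ Zfun := by
  intro x
  rcases eq_or_ne x 1 with rfl | hx
  · apply AnalyticAt.differentiableAt
    apply Complex.analyticAt_of_differentiable_on_punctured_nhds_of_continuousAt
    · filter_upwards [self_mem_nhdsWithin] with z hz
      have hz' : z ≠ 1 := hz
      have : DifferentiableAt ℂ (fun s => (s - 1) * riemannZeta s) z :=
        (differentiableAt_id.sub_const 1).mul (differentiableAt_riemannZeta hz')
      apply this.congr_of_eventuallyEq
      filter_upwards [isOpen_ne.mem_nhds hz'] with w hw
      exact Zfun_eq hw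
    · exact continuousAt_update_same.mpr riemannZeta_residue_one
  · have : DifferentiableAt ℂ (fun s => (s - 1) * riemannZeta s) x :=
      (differentiableAt_id.sub_const 1).mul (differentiableAt_riemannZeta hx)
    apply this.congr_of_eventuallyEq
    filter_upwards [isOpen_ne.mem_nhds hx] with w hw
    exact Zfun_eq hw

theorem stmt_14
    (h : ∃ g : ℂ → ℂ, DifferentiableOn ℂ g {s : ℂ | 1 / 2 < s.re} ∧
      ∀ s : ℂ, 2 < s.re →
        g s = Complex.Gamma s * (riemannZeta (s - 1) - riemannZeta s) / riemannZeta s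
            - ((6 / π ^ 2 : ℝ) : ℂ) / (s - 2)) :
    (∀ s : ℂ, 1 / 2 < s.re → riemannZeta s ≠ 0) ∧ RiemannHypothesis := by
  obtain ⟨g, hg, hgeq⟩ := h
  set c : ℂ := ((6 / π ^ 2 : ℝ) : ℂ) with hc
  set U : Set ℂ := {s : ℂ | 1 / 2 < s.re} with hU
  have hUopen : IsOpen U := isOpen_lt continuous_const Complex.continuous_re
  set F : ℂ → ℂ := fun s =>
    g s * ((s - 2) * Zfun s) + c * Zfun s
      - Complex.Gamma s * ((s - 1) * Zfun (s - 1) - (s - 2) * Zfun s) with hF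
  -- F is differentiable on U
  have hFdiff : DifferentiableOn ℂ F U := by
    apply DifferentiableOn.sub
    · exact (hg.mul (((differentiableOn_id.sub_const 2).mul
        (Zfun_diff.differentiableOn))) ).add
        ((differentiableOn_const c).mul Zfun_diff.differentiableOn)
    · apply DifferentiableOn.mul
      · intro s hs
        refine (Complex.differentiableAt_Gamma s fun m => ?_).differentiableWithinAt
        intro hsm
        have : (1/2 : ℝ) < s.re := hs
        rw [hsm] at this
        simp at this
        have : (0:ℝ) ≤ m := Nat.cast_nonneg m
        linarith
      · exact ((differentiableOn_id.sub_const 1).mul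
          ((Zfun_diff.comp (differentiable_id.sub_const 1)).differentiableOn)).sub
          ((differentiableOn_id.sub_const 2).mul Zfun_diff.differentiableOn)
  -- F vanishes on Re > 2
  have hFzero : ∀ s : ℂ, 2 < s.re → F s = 0 := by
    intro s hs
    have h1 : s ≠ 1 := by intro h1; rw [h1] at hs; norm_num at hs
    have h2 : s ≠ 2 := by intro h2; rw [h2] at hs; norm_num at hs
    have h2' : s - 2 ≠ 0 := sub_ne_zero.mpr h2
    have hz : riemannZeta s ≠ 0 := riemannZeta_ne_zero_of_one_lt_re (by linarith)
    have hs1 : s - 1 ≠ 1 := by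
      intro hh; exact h2 (by linear_combination hh)
    rw [hF]
    simp only
    rw [Zfun_eq h1, Zfun_eq hs1, hgeq s hs]
    have : s - 1 - 1 = s - 2 := by ring
    rw [this]
    field_simp
    ring
  -- Identity theorem: F vanishes on U
  have hFU : ∀ s ∈ U, F s = 0 := by
    have hA : AnalyticOnNhd ℂ F U := hFdiff.analyticOnNhd hUopen
    have hA0 : AnalyticOnNhd ℂ (fun _ => (0:ℂ)) U := analyticOnNhd_const
    have hpre : IsPreconnected U := (convex_halfSpace_re_gt (1/2 : ℝ)).isPreconnected
    have h3 : (3:ℂ) ∈ U := by simp [hU]; norm_num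
    have hev : F =ᶠ[nhds (3:ℂ)] (fun _ => (0:ℂ)) := by
      have hop : IsOpen {s : ℂ | 2 < s.re} := isOpen_lt continuous_const Complex.continuous_re
      have h3' : (3:ℂ) ∈ {s : ℂ | 2 < s.re} := by simp; norm_num
      filter_upwards [hop.mem_nhds h3'] with w hw
      exact hFzero w hw
    exact hA.eqOn_of_preconnected_of_eventuallyEq hA0 hpre h3 hev
  -- Part 1: no zeros with Re > 1/2
  have part1 : ∀ s : ℂ, 1 / 2 < s.re → riemannZeta s ≠ 0 := by
    intro ρ hρ hzero
    have hρ1 : ρ.re < 1 := by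
      by_contra hcon
      exact riemannZeta_ne_zero_of_one_le_re (not_lt.mp hcon) hzero
    have hρne1 : ρ ≠ 1 := by intro hh; rw [hh] at hρ1; norm_num at hρ1
    have hZρ : Zfun ρ = 0 := by rw [Zfun_eq hρne1, hzero, mul_zero]
    have hFρ := hFU ρ hρ
    rw [hF] at hFρ
    simp only [hZρ, mul_zero, add_zero, sub_zero, zero_sub, neg_eq_zero] at hFρ
    have hΓ : Complex.Gamma ρ ≠ 0 := Complex.Gamma_ne_zero_of_re_pos (by linarith)
    have hρ1' : ρ - 1 ≠ 0 := sub_ne_zero.mpr hρne1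
    have hZρ1 : Zfun (ρ - 1) = 0 := by
      have := mul_eq_zero.mp hFρ
      rcases this with h' | h'
      · exact absurd h' hΓ
      · rcases mul_eq_zero.mp h' with h'' | h''
        · exact absurd h'' hρ1'
        · exact h''
    have hρne2 : ρ - 1 ≠ 1 := by
      intro hh
      have : ρ = 2 := by linear_combination hh
      rw [this] at hρ1; norm_num at hρ1
    rw [Zfun_eq hρne2] at hZρ1
    have hρ2 : ρ - 1 - 1 ≠ 0 := by
      intro hh
      have : ρ = 2 := by linear_combination hh
      rw [this] at hρ1; norm_num at hρ1
    have hzζ : riemannZeta (ρ - 1) = 0 := by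
      rcases mul_eq_zero.mp hZρ1 with h' | h'
      · exact absurd h' hρ2
      · exact h'
    -- functional equation: ζ(ρ-1) = ζ(1 - (2-ρ)) ≠ 0
    set w : ℂ := 2 - ρ with hw
    have hwre : 1 < w.re ∧ w.re < 3/2 := by
      have : w.re = 2 - ρ.re := by simp [hw, Complex.sub_re]
      rw [this]
      constructor <;> linarith
    have h1w : (1:ℂ) - w = ρ - 1 := by ring
    have hfe := riemannZeta_one_sub (s := w) (fun n => by
        intro hh
        have : w.re = -(n:ℝ) := by rw [hh]; simp
        have : (0:ℝ) ≤ (n:ℝ) := Nat.cast_nonneg n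
        linarith [hwre.1]) (by
        intro hh
        rw [hh] at hwre; norm_num at hwre)
    rw [h1w, hzζ] at hfe
    have h2π : ((2:ℂ) * π) ≠ 0 := by
      apply mul_ne_zero two_ne_zero
      exact_mod_cast Real.pi_ne_zero
    have hcpow : ((2:ℂ) * π) ^ (-w) ≠ 0 := by
      intro hh
      exact h2π ((Complex.cpow_eq_zero_iff _ _).mp hh).1
    have hΓw : Complex.Gamma w ≠ 0 := Complex.Gamma_ne_zero_of_re_pos (by linarith [hwre.1])
    have hζw : riemannZeta w ≠ 0 := riemannZeta_ne_zero_of_one_le_re (le_of_lt hwre.1)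
    have hcos : Complex.cos ((π:ℂ) * w / 2) ≠ 0 := by
      intro hh
      obtain ⟨k, hk⟩ := Complex.cos_eq_zero_iff.mp hh
      have hπ : (π:ℂ) ≠ 0 := by exact_mod_cast Real.pi_ne_zero
      have hwk : w = 2 * (k:ℂ) + 1 := by
        have h2 : (π:ℂ) * w = (π:ℂ) * (2 * (k:ℂ) + 1) := by linear_combination 2 * hk
        exact mul_left_cancel₀ hπ h2
      have : w.re = 2 * (k:ℝ) + 1 := by rw [hwk]; simp
      rw [this] at hwre
      have hk0 : (0:ℝ) < (k:ℝ) := by linarith [hwre.1]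
      have hk1 : (1:ℤ) ≤ k := by exact_mod_cast hk0
      have : (1:ℝ) ≤ (k:ℝ) := by exact_mod_cast hk1
      linarith [hwre.2]
    have : (2:ℂ) * (2 * π) ^ (-w) * Complex.Gamma w * Complex.cos ((π:ℂ) * w / 2)
        * riemannZeta w ≠ 0 :=
      mul_ne_zero (mul_ne_zero (mul_ne_zero (mul_ne_zero two_ne_zero hcpow) hΓw) hcos) hζw
    exact this hfe.symm
  refine ⟨part1, ?_⟩
  -- Part 2: RH
  intro s hzero hnt hs1
  rcases lt_trichotomy s.re (1/2) with hlt | heq | hgt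
  · -- use functional equation to move the zero to the right
    set w : ℂ := 1 - s with hw
    have hwre : 1/2 < w.re := by
      have : w.re = 1 - s.re := by simp [hw, Complex.sub_re]
      rw [this]; linarith
    have hs0 : s ≠ 0 := by
      intro hh; rw [hh, riemannZeta_zero] at hzero; norm_num at hzero
    have hw1 : w ≠ 1 := by
      intro hh
      apply hs0
      have : s = 1 - w := by rw [hw]; ring
      rw [this, hh]; ring
    have h1w : (1:ℂ) - w = s := by rw [hw]; ring
    have hfe := riemannZeta_one_sub (s := w) (fun n => by
        intro hh
        have : w.re = -(n:ℝ) := by rw [hh]; simp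
        have : (0:ℝ) ≤ (n:ℝ) := Nat.cast_nonneg n
        linarith) hw1
    rw [h1w, hzero] at hfe
    have h2π : ((2:ℂ) * π) ≠ 0 := by
      apply mul_ne_zero two_ne_zero
      exact_mod_cast Real.pi_ne_zero
    have hcpow : ((2:ℂ) * π) ^ (-w) ≠ 0 := by
      intro hh
      exact h2π ((Complex.cpow_eq_zero_iff _ _).mp hh).1
    have hΓw : Complex.Gamma w ≠ 0 := Complex.Gamma_ne_zero_of_re_pos (by linarith)
    have hζw : riemannZeta w ≠ 0 := part1 w hwre
    have hcos : Complex.cos ((π:ℂ) * w / 2) = 0 := by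
      by_contra hcos
      have : (2:ℂ) * (2 * π) ^ (-w) * Complex.Gamma w * Complex.cos ((π:ℂ) * w / 2)
          * riemannZeta w ≠ 0 :=
        mul_ne_zero (mul_ne_zero (mul_ne_zero (mul_ne_zero two_ne_zero hcpow) hΓw) hcos) hζw
      exact this hfe.symm
    obtain ⟨k, hk⟩ := Complex.cos_eq_zero_iff.mp hcos
    have hπ : (π:ℂ) ≠ 0 := by exact_mod_cast Real.pi_ne_zero
    have hwk : w = 2 * (k:ℂ) + 1 := by
      have h2 : (π:ℂ) * w = (π:ℂ) * (2 * (k:ℂ) + 1) := by linear_combination 2 * hk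
      exact mul_left_cancel₀ hπ h2
    have hkre : w.re = 2 * (k:ℝ) + 1 := by rw [hwk]; simp
    have hk0 : (0:ℝ) < (k:ℝ) := by
      by_contra hcon
      push_neg at hcon
      rcases eq_or_lt_of_le hcon with hE | hL
      · apply hw1
        have hk0' : k = 0 := by exact_mod_cast hE
        rw [hwk, hk0']; simp
      · have hkz : (k:ℤ) < 0 := by exact_mod_cast hL
        have hkz' : k ≤ -1 := by omega
        have : (k:ℝ) ≤ -1 := by exact_mod_cast hkz'
        rw [hkre] at hwre
        linarith
    have hk1 : (1:ℤ) ≤ k := by exact_mod_cast hk0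
    apply absurd hnt
    push_neg
    refine ⟨(k - 1).toNat, ?_⟩
    have hcast : (((k - 1).toNat : ℕ) : ℂ) = (k:ℂ) - 1 := by
      have : ((k - 1).toNat : ℤ) = k - 1 := Int.toNat_of_nonneg (by omega)
      exact_mod_cast congrArg (Int.cast : ℤ → ℂ) this
    have : s = 1 - w := by rw [hw]; ring
    rw [this, hwk, hcast]
    ring
  · exact heq
  · exact absurd hzero (part1 s hgt)
end
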